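/- For an odd prime p and any unit vector |φ⟩ ∈ C^p, the sum of fourth powers of overlaps with all p+1 mutually unbiased stabilizer bases equals 2: Σ_{V∈Z_p} |⟨V|φ⟩|⁴ + Σ_{B∈Z_p} Σ_{V∈Z_p} |⟨ψ_B^V|φ⟩|⁴ = 2. -/

import Mathlib

open Complex Matrix BigOperators Finset
open scoped Kronecker

noncomputable section

/-- Additive character `a ↦ exp(2πi a/p)` on `ZMod p`. -/
def chi (p : ℕ) (a : ZMod p) : ℂ := Complex.exp (2 * Real.pi * Complex.I * (a.val : ℂ) / p)

/-- The shift operator `X : |j⟩ ↦ |j+1⟩`. -/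
def Xop (p : ℕ) : Matrix (ZMod p) (ZMod p) ℂ := fun j k => if j = k + 1 then 1 else 0

/-- The clock operator `Z : |j⟩ ↦ ω^j |j⟩`. -/
def Zop (p : ℕ) : Matrix (ZMod p) (ZMod p) ℂ := Matrix.diagonal (fun j => chi p j)

/-- Weyl-Heisenberg displacement operator `D_(x|z) = ω^{2⁻¹ x z} X^x Z^z`. -/
def Dop (p : ℕ) [NeZero p] (x z : ZMod p) : Matrix (ZMod p) (ZMod p) ℂ :=
  chi p ((2 : ZMod p)⁻¹ * x * z) • (Xop p ^ x.val * Zop p ^ z.val)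

/-- The stabilizer MUB vector `|ψ_B^V⟩ = p^{-1/2} Σ_k ω^{2⁻¹ B k² - V k} |k⟩`. -/
def psi (p : ℕ) (B V : ZMod p) : ZMod p → ℂ :=
  fun k => ((Real.sqrt p : ℂ))⁻¹ * chi p ((2 : ZMod p)⁻¹ * B * k ^ 2 - V * k)

/-- The magic state `|f_{a,b,c}⟩ = p^{-1/2} Σ_k ω^{a k³ + b k² + c k} |k⟩`. -/
def magic (p : ℕ) (a b c : ZMod p) : ZMod p → ℂ :=
  fun k => ((Real.sqrt p : ℂ))⁻¹ * chi p (a * k ^ 3 + b * k ^ 2 + c * k)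

/-- Rank-one projector `|v⟩⟨v|`. -/
def proj (p : ℕ) (v : ZMod p → ℂ) : Matrix (ZMod p) (ZMod p) ℂ :=
  fun i j => v i * (starRingEnd ℂ) (v j)

/-- The single-qudit operator `S = Σ_B |ψ_B^{-B(B+2⁻¹)}⟩⟨ψ_B^{-B(B+2⁻¹)}|`. -/
def Sop (p : ℕ) [NeZero p] : Matrix (ZMod p) (ZMod p) ℂ :=
  ∑ B : ZMod p, proj p (psi p B (-B * (B + (2 : ZMod p)⁻¹)))

/-!
Up to the factor `p^{-1/2}`, the overlap `⟨ψ_B^V|φ⟩` is `∑ₖ ψ(B' k² + V k) φₖ` with `B' = -B/2` and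
`ψ` the standard additive character. Expanding the fourth power and summing over `B'` and `V`,
orthogonality of characters keeps exactly the quadruples with `k + m = l + n` and
`k² + m² = l² + n²`, which in odd characteristic force `{l, n} = {k, m}`. These contribute
`p² (2 (∑ₖ |φₖ|²)² - ∑ₖ |φₖ|⁴)`, so the `p²` stabilizer vectors give `2 - ∑ₖ |φₖ|⁴`, and the
computational basis supplies the missing `∑ₖ |φₖ|⁴`.
-/

open scoped ComplexConjugate

lemma norm_sum_pow_four_eq_sum_mul_conj {ι : Type*} [Fintype ι] (c : ι → ℂ) :
    (‖∑ i, c i‖ : ℂ) ^ 4 = ∑ k, ∑ m, ∑ l, ∑ n, c k * c m * conj (c l * c n) := by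
  have h : (‖∑ i, c i‖ : ℂ) ^ 4 = (∑ i, c i) * (∑ i, c i) * conj ((∑ i, c i) * ∑ i, c i) := by
    rw [map_mul, show 4 = 2 * 2 from rfl, pow_mul, ← Complex.mul_conj']
    ring
  rw [h, Finset.sum_mul_sum]
  simp only [Finset.sum_mul]
  simp only [map_sum, Finset.mul_sum]

lemma AddChar.mul_mul_conj_mul {G : Type*} [AddCommGroup G] [Finite G] (ψ : AddChar G ℂ)
    (a b c d : G) : ψ a * ψ b * conj (ψ c * ψ d) = ψ (a + b - c - d) := by
  rw [map_mul, ← AddChar.map_neg_eq_conj, ← AddChar.map_neg_eq_conj, sub_sub, sub_eq_add_neg,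
    neg_add, AddChar.map_add_eq_mul, AddChar.map_add_eq_mul, AddChar.map_add_eq_mul, mul_assoc]

lemma sq_add_sq_sub_sub_and_add_sub_sub_eq_zero_iff {R : Type*} [CommRing R] [NoZeroDivisors R]
    (h2 : (2 : R) ≠ 0) (k m l n : R) :
    k ^ 2 + m ^ 2 - l ^ 2 - n ^ 2 = 0 ∧ k + m - l - n = 0 ↔
      (l = k ∧ n = m) ∨ (l = m ∧ n = k) := by
  constructor
  · rintro ⟨hquad, hlin⟩
    obtain rfl : n = k + m - l := by linear_combination -hlin
    have : 2 * ((k - l) * (l - m)) = 0 := by linear_combination hquad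
    rcases mul_eq_zero.1 ((mul_eq_zero.1 this).resolve_left h2) with h | h
    · exact .inl ⟨by linear_combination -h, by linear_combination h⟩
    · exact .inr ⟨by linear_combination h, by linear_combination -h⟩
  · rintro (⟨rfl, rfl⟩ | ⟨rfl, rfl⟩) <;> constructor <;> ring

lemma sum_sum_ite_eq_or_swap {ι M : Type*} [Fintype ι] [DecidableEq ι] [AddCommGroup M]
    (f : ι → ι → M) (k m : ι) :
    ∑ l, ∑ n, (if (l = k ∧ n = m) ∨ (l = m ∧ n = k) then f l n else 0) =
      f k m + f m k - if k = m then f k m else 0 := by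
  have inclusion_exclusion : ∀ l n,
      (if (l = k ∧ n = m) ∨ (l = m ∧ n = k) then f l n else 0) =
        (if l = k ∧ n = m then f l n else 0) + (if l = m ∧ n = k then f l n else 0) -
          if (l = k ∧ n = m) ∧ (l = m ∧ n = k) then f l n else 0 := by
    intro l n
    by_cases h₁ : l = k ∧ n = m <;> by_cases h₂ : l = m ∧ n = k <;> simp [h₁, h₂]
  simp only [inclusion_exclusion, Finset.sum_add_distrib, Finset.sum_sub_distrib, ite_and]
  by_cases h : k = m <;> simp [h, eq_comm]

lemma sum_ite_eq_or_swap_mul_conj {ι : Type*} [Fintype ι] [DecidableEq ι] (φ : ι → ℂ) :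
    ∑ k, ∑ m, ∑ l, ∑ n,
        (if (l = k ∧ n = m) ∨ (l = m ∧ n = k) then φ k * φ m * conj (φ l * φ n) else 0) =
      2 * (∑ i, (‖φ i‖ : ℂ) ^ 2) ^ 2 - ∑ i, (‖φ i‖ : ℂ) ^ 4 := by
  have hdiag : ∀ k m, φ k * φ m * conj (φ k * φ m) = ‖φ k‖ ^ 2 * ‖φ m‖ ^ 2 := fun k m => by
    rw [map_mul, ← Complex.mul_conj', ← Complex.mul_conj']
    ring
  have hswap : ∀ k m, φ k * φ m * conj (φ m * φ k) = φ k * φ m * conj (φ k * φ m) :=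
    fun k m => by rw [mul_comm (φ m)]
  simp only [sum_sum_ite_eq_or_swap, hswap, hdiag, Finset.sum_sub_distrib, ← two_mul,
    ← Finset.mul_sum, ← Finset.sum_mul, Finset.sum_ite_eq, Finset.mem_univ, if_true]
  exact congr_arg₂ _ (by ring) (Finset.sum_congr rfl fun i _ => by ring)

section FourthMoment

variable {F : Type*} [Field F] [Fintype F]

lemma AddChar.sum_sum_mul_add_mul_eq_ite [DecidableEq F] {ψ : AddChar F ℂ} (hψ : ψ.IsPrimitive)
    (a b : F) :
    ∑ B : F, ∑ V : F, ψ (B * a + V * b) =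
      if a = 0 ∧ b = 0 then (Fintype.card F : ℂ) ^ 2 else 0 := by
  simp only [AddChar.map_add_eq_mul, ← Finset.mul_sum, ← Finset.sum_mul,
    AddChar.sum_mulShift _ hψ]
  split_ifs <;> simp_all [sq]

lemma norm_sum_addChar_quadratic_mul_pow_four_eq_sum (ψ : AddChar F ℂ) (φ : F → ℂ) (B V : F) :
    (‖∑ k, ψ (B * k ^ 2 + V * k) * φ k‖ : ℂ) ^ 4 =
      ∑ x : F × F × F × F,
        ψ (B * (x.1 ^ 2 + x.2.1 ^ 2 - x.2.2.1 ^ 2 - x.2.2.2 ^ 2) +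
            V * (x.1 + x.2.1 - x.2.2.1 - x.2.2.2)) *
          (φ x.1 * φ x.2.1 * conj (φ x.2.2.1 * φ x.2.2.2)) := by
  rw [norm_sum_pow_four_eq_sum_mul_conj]
  simp only [Fintype.sum_prod_type]
  refine Finset.sum_congr rfl fun k _ => Finset.sum_congr rfl fun m _ =>
    Finset.sum_congr rfl fun l _ => Finset.sum_congr rfl fun n _ => ?_
  rw [show B * (k ^ 2 + m ^ 2 - l ^ 2 - n ^ 2) + V * (k + m - l - n) =
    B * k ^ 2 + V * k + (B * m ^ 2 + V * m) - (B * l ^ 2 + V * l) - (B * n ^ 2 + V * n) by ring,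
    ← ψ.mul_mul_conj_mul]
  simp only [map_mul]
  ring

theorem sum_sum_norm_sum_addChar_quadratic_mul_pow_four {ψ : AddChar F ℂ} (hψ : ψ.IsPrimitive)
    (h2 : (2 : F) ≠ 0) (φ : F → ℂ) :
    ∑ B, ∑ V, ‖∑ k, ψ (B * k ^ 2 + V * k) * φ k‖ ^ 4 =
      Fintype.card F ^ 2 * (2 * (∑ k, ‖φ k‖ ^ 2) ^ 2 - ∑ k, ‖φ k‖ ^ 4) := by
  classical
  apply Complex.ofReal_injective
  push_cast
  simp_rw [norm_sum_addChar_quadratic_mul_pow_four_eq_sum,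
    Finset.sum_comm (t := (Finset.univ : Finset (F × F × F × F))), ← Finset.sum_mul,
    AddChar.sum_sum_mul_add_mul_eq_ite hψ, sq_add_sq_sub_sub_and_add_sub_sub_eq_zero_iff h2,
    ite_zero_mul]
  rw [← sum_ite_eq_or_swap_mul_conj, Finset.mul_sum]
  simp only [Fintype.sum_prod_type, Finset.mul_sum, mul_ite, mul_zero]

end FourthMoment

lemma chi_eq_stdAddChar (p : ℕ) [NeZero p] (a : ZMod p) : chi p a = ZMod.stdAddChar a := by
  rw [ZMod.stdAddChar_apply, ZMod.toCircle_apply, chi]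

lemma conj_psi (p : ℕ) [NeZero p] (B V k : ZMod p) :
    conj (psi p B V k) = (Real.sqrt p : ℂ)⁻¹ * ZMod.stdAddChar (-2⁻¹ * B * k ^ 2 + V * k) := by
  rw [psi, map_mul, map_inv₀, Complex.conj_ofReal, chi_eq_stdAddChar,
    ← AddChar.map_neg_eq_conj]
  ring_nf

lemma norm_sum_conj_psi_mul_pow_four (p : ℕ) [NeZero p] (φ : ZMod p → ℂ) (B V : ZMod p) :
    ‖∑ k, conj (psi p B V k) * φ k‖ ^ 4 =
      ((p : ℝ) ^ 2)⁻¹ * ‖∑ k, ZMod.stdAddChar (-2⁻¹ * B * k ^ 2 + V * k) * φ k‖ ^ 4 := by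
  simp only [conj_psi, mul_assoc ((Real.sqrt p : ℂ)⁻¹), ← Finset.mul_sum, norm_mul, mul_pow,
    norm_inv, Complex.norm_real, Real.norm_eq_abs, abs_of_nonneg (Real.sqrt_nonneg _)]
  rw [show 4 = 2 * 2 from rfl, pow_mul, inv_pow, Real.sq_sqrt (Nat.cast_nonneg p), inv_pow]

theorem stmt15 (p : ℕ) [Fact p.Prime] (hp2 : p ≠ 2) (φ : ZMod p → ℂ)
    (hφ : ∑ k : ZMod p, ‖φ k‖ ^ 2 = 1) :
    (∑ V : ZMod p, ‖φ V‖ ^ 4) +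
      ∑ B : ZMod p, ∑ V : ZMod p,
        ‖∑ k : ZMod p, (starRingEnd ℂ) (psi p B V k) * φ k‖ ^ 4 = 2 := by
  have h2 : (2 : ZMod p) ≠ 0 := Ring.two_ne_zero (by rwa [ZMod.ringChar_zmod_n])
  have hp : (p : ℝ) ≠ 0 := Nat.cast_ne_zero.2 (Fact.out : p.Prime).ne_zero
  simp only [norm_sum_conj_psi_mul_pow_four, ← Finset.mul_sum]
  rw [Fintype.sum_bijective _ (mulLeft_bijective₀ _ (neg_ne_zero.2 (inv_ne_zero h2))) _
      (fun B => ∑ V, ‖∑ k, ZMod.stdAddChar (B * k ^ 2 + V * k) * φ k‖ ^ 4) fun _ => rfl,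
    sum_sum_norm_sum_addChar_quadratic_mul_pow_four (ZMod.isPrimitive_stdAddChar p) h2, hφ,
    ZMod.card]
  field_simp
  ring
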